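/- Let G_i = (V_i, E_i), i = 1, ..., k, be finite simple graphs with nonempty vertex sets. Suppose W ⊆ V_1 × ... × V_k contains no orthogonal star, i.e. there is no choice of edges {u_i, w_i} ∈ E_i for i = 1, ..., k such that the k+1 tuples W_0 = (w_1, ..., w_k) and, for each i ∈ {1, ..., k}, W_i = (w_1, ..., w_{i-1}, u_i, w_{i+1}, ..., w_k) all lie in W. Then |W| / (|V_1| ⋯ |V_k|) ≤ Σ_{i=1}^{k} α(G_i)/|V_i|. -/

import Mathlib

/-!
Call `w ∈ W` isolated along `i` if no `G i`-neighbour of `w i` can replace it in `W`. Without an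
orthogonal star every point of `W` is isolated along some coordinate. Along a line in direction
`i` the points isolated along `i` form an independent set of `G i`, so there are at most
`α(G i) · ∏_{j ≠ i} |V j|` of them; summing over `i` and dividing by `∏ |V j|` gives the bound.
-/

/-- The independence number of a finite simple graph: the largest size of a set of
vertices inducing no edges. -/
noncomputable def indepNum {V : Type*} [Fintype V] (G : SimpleGraph V) : ℕ :=
  sSup {m | ∃ s : Finset V, (∀ x ∈ s, ∀ y ∈ s, ¬ G.Adj x y) ∧ s.card = m}

open Finset

lemma card_le_indepNum {V : Type*} [Fintype V] (G : SimpleGraph V) (s : Finset V)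
    (h : ∀ x ∈ s, ∀ y ∈ s, ¬ G.Adj x y) : #s ≤ indepNum G :=
  le_csSup ⟨Fintype.card V, fun _ ⟨t, _, ht⟩ => ht ▸ t.card_le_univ⟩ ⟨s, h, rfl⟩

section IsolatedAlong

variable {ι : Type*} [DecidableEq ι] {V : ι → Type*}
  (G : ∀ i, SimpleGraph (V i)) (W : Finset (∀ i, V i))

open Classical in
noncomputable def isolatedAlong (i : ι) : Finset (∀ i, V i) :=
  {w ∈ W | ∀ u, (G i).Adj u (w i) → Function.update w i u ∉ W}

variable {G W}

lemma mem_isolatedAlong {i : ι} {w : ∀ i, V i} :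
    w ∈ isolatedAlong G W i ↔ w ∈ W ∧ ∀ u, (G i).Adj u (w i) → Function.update w i u ∉ W := by
  simp only [isolatedAlong, mem_filter]

lemma exists_mem_isolatedAlong
    (hW : ¬ ∃ (u w : ∀ i, V i), (∀ i, (G i).Adj (u i) (w i)) ∧
      w ∈ W ∧ ∀ i, Function.update w i (u i) ∈ W) {w : ∀ i, V i} (hw : w ∈ W) :
    ∃ i, w ∈ isolatedAlong G W i := by
  by_contra! hnot
  have hstar : ∀ i, ∃ u, (G i).Adj u (w i) ∧ Function.update w i u ∈ W := by
    simpa [mem_isolatedAlong, hw] using hnot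
  choose u hadj hmem using hstar
  exact hW ⟨u, w, hadj, hw, hmem⟩

lemma card_isolatedAlong_le [Fintype ι] [∀ i, Fintype (V i)] (i : ι) :
    #(isolatedAlong G W i) ≤ indepNum (G i) * ∏ j : {j // j ≠ i}, Fintype.card (V j) := by
  classical
  let π : (∀ j, V j) → ∀ j : {j // j ≠ i}, V j := fun w j => w j
  rw [← Fintype.card_pi, ← card_univ]
  refine card_le_mul_card_image_of_maps_to (fun w _ => mem_univ (π w)) _ fun g _ => ?_
  set F := {w ∈ isolatedAlong G W i | π w = g}
  have hline : ∀ a ∈ F, ∀ b ∈ F, Function.update a i (b i) = b := by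
    intro a ha b hb
    simp only [F, mem_filter] at ha hb
    refine Function.update_eq_iff.2 ⟨rfl, fun j hj => ?_⟩
    exact congrFun (ha.2.trans hb.2.symm) ⟨j, hj⟩
  have hinj : Set.InjOn (fun w : ∀ j, V j => w i) F := fun a ha b hb hab => by
    rw [← hline a ha b hb, ← show a i = b i from hab, Function.update_eq_self]
  rw [← card_image_of_injOn hinj]
  refine card_le_indepNum _ _ ?_
  simp only [mem_image]
  rintro _ ⟨a, ha, rfl⟩ _ ⟨b, hb, rfl⟩ hab
  have hbW : b ∈ W := (mem_isolatedAlong.1 (mem_filter.1 hb).1).1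
  have ha' := (mem_isolatedAlong.1 (mem_filter.1 ha).1).2
  exact ha' (b i) hab.symm (by rwa [hline a ha b hb])

end IsolatedAlong

/-- If `W ⊆ V 1 × ⋯ × V k` contains no orthogonal star, then
`|W| / (|V 1| ⋯ |V k|) ≤ Σ α(G i)/|V i|`. -/
theorem cutting_corners_orthogonal_star {k : ℕ} {V : Fin k → Type*}
    [∀ i, Fintype (V i)] [∀ i, Nonempty (V i)]
    (G : ∀ i, SimpleGraph (V i)) (W : Finset (∀ i, V i))
    (hW : ¬ ∃ (u w : ∀ i, V i), (∀ i, (G i).Adj (u i) (w i)) ∧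
      w ∈ W ∧ ∀ i, Function.update w i (u i) ∈ W) :
    (W.card : ℝ) / ∏ i, (Fintype.card (V i) : ℝ) ≤
      ∑ i, (indepNum (G i) : ℝ) / (Fintype.card (V i) : ℝ) := by
  classical
  have hcover : W ⊆ univ.biUnion (isolatedAlong G W) := fun w hw =>
    mem_biUnion.2 <| (exists_mem_isolatedAlong hW hw).imp fun i h => ⟨mem_univ i, h⟩
  have hcard : (#W : ℝ) ≤
      ∑ i, (indepNum (G i) : ℝ) * ∏ j : {j // j ≠ i}, (Fintype.card (V j) : ℝ) := by
    exact_mod_cast (card_le_card hcover).trans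
      (card_biUnion_le.trans (sum_le_sum fun i _ => card_isolatedAlong_le i))
  have hpos : ∀ i, (0 : ℝ) < Fintype.card (V i) := fun i => by positivity
  rw [div_le_iff₀ (prod_pos fun i _ => hpos i), sum_mul]
  refine hcard.trans_eq (sum_congr rfl fun i _ => ?_)
  rw [Fintype.prod_eq_mul_prod_subtype_ne _ i]
  field_simp [(hpos i).ne']
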